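/- arXiv:2208.04603 — 2 statements merged into one kernel-verified Lean document; each statement's English description precedes it below -/
import Mathlib

section
/- For ρ > 1 with r = 2ρ/(1+ρ²), the Möbius transformation ψ(ζ) = ρ(ρζ + i)/(ζ + iρ) maps the circle {|ζ + i r/2| = r/2} into the unit circle {|w| = 1}. -/
/-!
Both the circle condition and the equation `|ψ(ζ)| = 1` are real-quadratic in `ζ`.
The circle `|ζ + i r/2| = r/2` is `|ζ|² + r Im ζ = 0`, while
`|ρ(ρζ + i)|² - |ζ + iρ|² = (ρ² - 1)((1 + ρ²)|ζ|² + 2ρ Im ζ)`,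
which vanishes on the circle precisely because `r (1 + ρ²) = 2ρ`.
The pole `-iρ` is not on the circle since `r < ρ`.
-/

open Complex

lemma normSq_add_I_mul_ofReal (ζ : ℂ) (a : ℝ) :
    normSq (ζ + I * a) = normSq ζ + 2 * a * ζ.im + a ^ 2 := by
  simp only [normSq_apply, add_re, add_im, mul_re, mul_im, I_re, I_im, ofReal_re, ofReal_im]
  ring

lemma normSq_ofReal_mul_ofReal_mul_add_I_sub (ρ : ℝ) (ζ : ℂ) :
    normSq (ρ * (ρ * ζ + I)) - normSq (ζ + I * ρ)
      = (ρ ^ 2 - 1) * ((1 + ρ ^ 2) * normSq ζ + 2 * ρ * ζ.im) := by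
  simp only [normSq_apply, add_re, add_im, mul_re, mul_im, I_re, I_im, ofReal_re, ofReal_im]
  ring

lemma two_mul_div_one_add_sq_lt_self {ρ : ℝ} (hρ : 1 < ρ) : 2 * ρ / (1 + ρ ^ 2) < ρ := by
  rw [div_lt_iff₀ (by positivity)]
  nlinarith

theorem stmt_2 (ρ : ℝ) (hρ : 1 < ρ) (r : ℝ) (hr : r = 2 * ρ / (1 + ρ ^ 2))
    (ζ : ℂ) (hζ : ‖ζ + Complex.I * (r / 2)‖ = r / 2) :
    ‖(ρ : ℂ) * ((ρ : ℂ) * ζ + Complex.I) / (ζ + Complex.I * ρ)‖ = 1 := by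
  have hcirc : normSq ζ + r * ζ.im = 0 := by
    have h := normSq_add_I_mul_ofReal ζ (r / 2)
    rw [← Complex.sq_norm, ofReal_div, ofReal_ofNat, hζ] at h
    linarith
  have hrρ : r * (1 + ρ ^ 2) = 2 * ρ := by
    rw [hr]; field_simp
  have hnorm : ‖(ρ : ℂ) * ((ρ : ℂ) * ζ + I)‖ = ‖ζ + I * ρ‖ := by
    have h := normSq_ofReal_mul_ofReal_mul_add_I_sub ρ ζ
    rw [norm_def, norm_def]
    congr 1
    linear_combination h + (ρ ^ 2 - 1) * ((1 + ρ ^ 2) * hcirc - ζ.im * hrρ)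
  have hpole : ζ + I * ρ ≠ 0 := by
    intro h
    rw [eq_neg_of_add_eq_zero_left h] at hcirc
    have hrlt := hr ▸ two_mul_div_one_add_sq_lt_self hρ
    simp only [normSq_neg, normSq_mul, normSq_I, normSq_ofReal, neg_im, mul_im, I_re, I_im,
      ofReal_re, ofReal_im] at hcirc
    nlinarith
  rw [norm_div, hnorm, div_self (norm_ne_zero_iff.2 hpole)]
end

section
/- Let g : ℂ̂ \ {ζ₀} → ℂ̂ be injective and holomorphic (meromorphic) with ζ₀ on the unit circle, satisfying g(0) = 0, g'(0) > 0, and the symmetry g(1/z̄) = 1/‾g(z) for all z ≠ 0, ζ₀, with g mapping the unit disk into itself. Then g(z) = z for all z. -/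
/-!
Schwarz's lemma gives `‖g z‖ ≤ ‖z‖` on the unit disc, and the symmetry turns this into
`‖z‖ ≤ ‖g z‖` outside it. By injectivity and the open mapping theorem `g` stays away from `0`
near `ζ₀`, so by the symmetry it is also bounded there: the singularity at `ζ₀` is removable and
`g` extends to an entire function `G` vanishing only at `0`. Then `z / G z` is entire and bounded
by `1` outside the disc, hence constant by Liouville's theorem, so `G z = g'(0) z`; the two
inequalities give `|g'(0)| = 1`, and `g'(0) > 0` forces `g'(0) = 1`.
-/

open Set Metric Filter Topology ComplexConjugate
open scoped ComplexOrder

theorem Differentiable.apply_eq_apply_of_bounded_off_ball {E F : Type*} [NormedAddCommGroup E]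
    [NormedSpace ℂ E] [ProperSpace E] [NormedAddCommGroup F] [NormedSpace ℂ F] {f : E → F}
    (hf : Differentiable ℂ f) {R C : ℝ} (hC : ∀ z, R < ‖z‖ → ‖f z‖ ≤ C) (z w : E) :
    f z = f w := by
  refine hf.apply_eq_apply_of_bounded ?_ z w
  have hcompact : Bornology.IsBounded (f '' closedBall 0 R) :=
    ((isCompact_closedBall 0 R).image hf.continuous).isBounded
  refine (hcompact.union (isBounded_closedBall (x := 0) (r := C))).subset ?_
  rintro _ ⟨x, rfl⟩
  by_cases hx : ‖x‖ ≤ R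
  · exact Or.inl (mem_image_of_mem f (mem_closedBall_zero_iff.2 hx))
  · exact Or.inr (mem_closedBall_zero_iff.2 (hC x (not_le.1 hx)))

theorem Complex.eq_deriv_zero_mul_of_norm_le_norm_apply {G : ℂ → ℂ}
    (hG : Differentiable ℂ G) (h0 : G 0 = 0) (hd : deriv G 0 ≠ 0) (hne : ∀ z ≠ 0, G z ≠ 0)
    (hgrowth : ∀ z, 1 < ‖z‖ → ‖z‖ ≤ ‖G z‖) (z : ℂ) : G z = deriv G 0 * z := by
  set h := dslope G 0
  have hh : Differentiable ℂ h := by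
    rw [← differentiableOn_univ] at hG ⊢
    exact (Complex.differentiableOn_dslope univ_mem).2 hG
  have hh0 : h 0 = deriv G 0 := dslope_same G 0
  have hGh : ∀ z, G z = z * h z := fun z => by
    simpa [h0] using (sub_smul_dslope G 0 z).symm
  have hh_ne : ∀ z, h z ≠ 0 := by
    intro z
    rcases eq_or_ne z 0 with rfl | hz
    · rwa [hh0]
    · exact right_ne_zero_of_mul (hGh z ▸ hne z hz)
  have hbound : ∀ z, 1 < ‖z‖ → ‖(h z)⁻¹‖ ≤ 1 := by
    intro z hz
    have : ‖z‖ * 1 ≤ ‖z‖ * ‖h z‖ := by simpa [hGh z] using hgrowth z hz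
    rw [norm_inv]
    exact inv_le_one_of_one_le₀ (le_of_mul_le_mul_left this (by linarith))
  have hconst : (h z)⁻¹ = (h 0)⁻¹ :=
    (hh.inv hh_ne).apply_eq_apply_of_bounded_off_ball hbound z 0
  rw [hGh z, inv_inj.1 hconst, hh0, mul_comm]

theorem AnalyticAt.exists_pos_le_dist_of_injOn {f : ℂ → ℂ} {U : Set ℂ} {a : ℂ} {ε : ℝ}
    (hf : AnalyticAt ℂ f a) (hU : U ∈ 𝓝 a) (hinj : InjOn f U) (hε : 0 < ε) :
    ∃ r > 0, ∀ z ∈ U, ε ≤ dist z a → r ≤ dist (f z) (f a) := by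
  have hopen : 𝓝 (f a) ≤ map f (𝓝 a) := by
    refine hf.eventually_constant_or_nhds_le_map_nhds.resolve_left fun hconst => ?_
    have : ∀ᶠ z in 𝓝[≠] a, False := by
      filter_upwards [nhdsWithin_le_nhds (hconst.and hU), self_mem_nhdsWithin]
        with z ⟨hfz, hz⟩ hza using hza (hinj hz (mem_of_mem_nhds hU) hfz)
    obtain ⟨_, hfalse⟩ := this.exists
    exact hfalse
  obtain ⟨r, hr, hball⟩ := Metric.mem_nhds_iff.1
    (hopen (image_mem_map (inter_mem hU (ball_mem_nhds a hε))))
  refine ⟨r, hr, fun z hz hεz => not_lt.1 fun hlt => ?_⟩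
  obtain ⟨w, ⟨hwU, hwa⟩, hfw⟩ := hball (mem_ball.2 hlt)
  exact (mem_ball.1 hwa).not_ge (hinj hwU hz hfw ▸ hεz)

theorem Complex.exists_differentiable_eqOn_compl_singleton {E : Type*} [NormedAddCommGroup E]
    [NormedSpace ℂ E] [CompleteSpace E] {f : ℂ → E} {c : ℂ} {M : ℝ}
    (hf : DifferentiableOn ℂ f {c}ᶜ) (hb : ∀ᶠ z in 𝓝[≠] c, ‖f z‖ ≤ M) :
    ∃ F : ℂ → E, Differentiable ℂ F ∧ EqOn F f {c}ᶜ := by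
  set F := Function.update f c (limUnder (𝓝[≠] c) f)
  have hFf : EqOn F f {c}ᶜ := fun z hz => Function.update_of_ne hz _ _
  have hlim : Tendsto f (𝓝[≠] c) (𝓝 (limUnder (𝓝[≠] c) f)) :=
    tendsto_limUnder_of_differentiable_on_punctured_nhds_of_bounded_under
      (eventually_nhdsWithin_of_forall fun z hz =>
        hf.differentiableAt (isOpen_compl_singleton.mem_nhds hz))
      ⟨M + ‖f c‖, eventually_map.2 (hb.mono fun z hz => norm_sub_le_of_le hz le_rfl)⟩
  refine ⟨F, ?_, hFf⟩
  rw [← differentiableOn_univ, ← differentiableOn_compl_singleton_and_continuousAt_iff univ_mem]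
  exact ⟨(hf.congr hFf).mono fun z hz => hz.2, continuousAt_update_same.2 hlim⟩

def UnitCircleSymmetric (ζ₀ : ℂ) (g : ℂ → ℂ) : Prop :=
  ∀ z : ℂ, z ≠ 0 → z ≠ ζ₀ → 1 / conj z ≠ ζ₀ → g (1 / conj z) = 1 / conj (g z)

namespace UnitCircleSymmetric

variable {ζ₀ : ℂ} {g : ℂ → ℂ}

theorem one_div_conj_ne (hζ₀ : ‖ζ₀‖ = 1) {z : ℂ} (hz : z ≠ ζ₀) : 1 / conj z ≠ ζ₀ := by
  refine fun h => hz ?_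
  calc z = 1 / conj (1 / conj z) := by simp
    _ = ζ₀ := by rw [h, ← Complex.inv_eq_conj hζ₀, one_div, inv_inv]

theorem norm_apply_one_div_conj (hsym : UnitCircleSymmetric ζ₀ g) (hζ₀ : ‖ζ₀‖ = 1) {z : ℂ}
    (hz0 : z ≠ 0) (hzζ : z ≠ ζ₀) : ‖g (1 / conj z)‖ = ‖g z‖⁻¹ := by
  rw [hsym z hz0 hzζ (one_div_conj_ne hζ₀ hzζ)]
  simp

theorem norm_le_norm_apply (hsym : UnitCircleSymmetric ζ₀ g) (hζ₀ : ‖ζ₀‖ = 1)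
    (hS : ∀ z, ‖z‖ < 1 → ‖g z‖ ≤ ‖z‖) (hne : ∀ z, z ≠ 0 → z ≠ ζ₀ → g z ≠ 0) {z : ℂ}
    (hz : 1 < ‖z‖) : ‖z‖ ≤ ‖g z‖ := by
  have hz0 : z ≠ 0 := norm_pos_iff.1 (one_pos.trans hz)
  have hzζ : z ≠ ζ₀ := by rintro rfl; exact hz.ne' hζ₀
  have hw : ‖1 / conj z‖ = ‖z‖⁻¹ := by simp
  have := hS _ (hw ▸ inv_lt_one_of_one_lt₀ hz)
  rw [hsym.norm_apply_one_div_conj hζ₀ hz0 hzζ, hw] at this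
  exact (inv_le_inv₀ (norm_pos_iff.2 (hne z hz0 hzζ)) (one_pos.trans hz)).1 this

theorem norm_apply_le_of_norm_le_two (hsym : UnitCircleSymmetric ζ₀ g) (hζ₀ : ‖ζ₀‖ = 1)
    (hdisk : ∀ z : ℂ, ‖z‖ < 1 → ‖g z‖ < 1) {r : ℝ} (hr : 0 < r)
    (hlow : ∀ z, z ≠ ζ₀ → 1 / 2 ≤ ‖z‖ → r ≤ ‖g z‖) {z : ℂ} (hzζ : z ≠ ζ₀) (hz : ‖z‖ ≤ 2) :
    ‖g z‖ ≤ max 1 r⁻¹ := by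
  rcases lt_or_ge ‖z‖ 1 with hz1 | hz1
  · exact (hdisk z hz1).le.trans (le_max_left _ _)
  have hz0 : z ≠ 0 := norm_pos_iff.1 (one_pos.trans_le hz1)
  have := hlow _ (one_div_conj_ne hζ₀ hzζ) (by simpa using inv_anti₀ (by positivity) hz)
  rw [hsym.norm_apply_one_div_conj hζ₀ hz0 hzζ] at this
  exact ((le_inv_comm₀ hr (inv_pos.1 (hr.trans_le this))).1 this).trans (le_max_right _ _)

theorem exists_differentiable_extension (hsym : UnitCircleSymmetric ζ₀ g) (hζ₀ : ‖ζ₀‖ = 1)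
    (hdiff : DifferentiableOn ℂ g {ζ₀}ᶜ) (hinj : InjOn g {ζ₀}ᶜ) (h0 : g 0 = 0)
    (hdisk : ∀ z : ℂ, ‖z‖ < 1 → ‖g z‖ < 1) :
    ∃ G : ℂ → ℂ, Differentiable ℂ G ∧ EqOn G g {ζ₀}ᶜ ∧ G ζ₀ ≠ 0 := by
  have hU : {ζ₀}ᶜ ∈ 𝓝 (0 : ℂ) := compl_singleton_mem_nhds (by rintro rfl; simp at hζ₀)
  obtain ⟨r, hr, hlow⟩ := (hdiff.analyticAt hU).exists_pos_le_dist_of_injOn hU hinj one_half_pos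
  simp only [dist_zero_right, h0, mem_compl_iff, mem_singleton_iff] at hlow
  have hnear : ∀ᶠ z in 𝓝[≠] ζ₀, z ≠ ζ₀ ∧ 1 / 2 ≤ ‖z‖ ∧ ‖z‖ ≤ 2 := by
    filter_upwards [self_mem_nhdsWithin, nhdsWithin_le_nhds
      ((continuous_norm.tendsto ζ₀).eventually (Icc_mem_nhds (a := 1 / 2) (b := 2)
        (by norm_num [hζ₀]) (by norm_num [hζ₀])))] with z hzζ hz using ⟨hzζ, hz⟩
  obtain ⟨G, hG, hGg⟩ := Complex.exists_differentiable_eqOn_compl_singleton hdiff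
    (hnear.mono fun z ⟨hzζ, _, hz⟩ => hsym.norm_apply_le_of_norm_le_two hζ₀ hdisk hr hlow hzζ hz)
  refine ⟨G, hG, hGg, norm_pos_iff.1 (hr.trans_le ?_)⟩
  exact ge_of_tendsto ((hG.continuous.norm.tendsto ζ₀).mono_left nhdsWithin_le_nhds)
    (hnear.mono fun z ⟨hzζ, hz, _⟩ => hGg hzζ ▸ hlow z hzζ hz)

end UnitCircleSymmetric

theorem stmt_12 (ζ₀ : ℂ) (hζ₀ : ‖ζ₀‖ = 1) (g : ℂ → ℂ)
    (hdiff : DifferentiableOn ℂ g {ζ₀}ᶜ)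
    (hinj : Set.InjOn g {ζ₀}ᶜ)
    (h0 : g 0 = 0)
    (hderiv : 0 < (deriv g 0).re ∧ (deriv g 0).im = 0)
    (hsym : ∀ z : ℂ, z ≠ 0 → z ≠ ζ₀ → (1 / (starRingEnd ℂ) z) ≠ ζ₀ →
      g (1 / (starRingEnd ℂ) z) = 1 / (starRingEnd ℂ) (g z))
    (hdisk : ∀ z : ℂ, ‖z‖ < 1 → ‖g z‖ < 1) :
    ∀ z : ℂ, z ≠ ζ₀ → g z = z := by
  have hsym : UnitCircleSymmetric ζ₀ g := hsym
  have hne_of_norm : ∀ z : ℂ, ‖z‖ ≠ 1 → z ≠ ζ₀ := fun z hz h => hz (h ▸ hζ₀)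
  have hU : {ζ₀}ᶜ ∈ 𝓝 (0 : ℂ) := compl_singleton_mem_nhds (hne_of_norm 0 (by simp))
  have hS : ∀ z, ‖z‖ < 1 → ‖g z‖ ≤ ‖z‖ := fun z hz =>
    Complex.norm_le_norm_of_mapsTo_ball
      (hdiff.mono fun w hw => hne_of_norm w (mem_ball_zero_iff.1 hw).ne)
      (fun w hw => mem_closedBall_zero_iff.2 (hdisk w (mem_ball_zero_iff.1 hw)).le) h0 hz
  have hne : ∀ z, z ≠ 0 → z ≠ ζ₀ → g z ≠ 0 := fun z hz0 hzζ hgz =>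
    hz0 (hinj hzζ (mem_of_mem_nhds hU) (hgz.trans h0.symm))
  obtain ⟨G, hG, hGg, hGζ₀⟩ := hsym.exists_differentiable_extension hζ₀ hdiff hinj h0 hdisk
  have hGg0 : G =ᶠ[𝓝 0] g := eventually_of_mem hU hGg
  have hGgrowth : ∀ z, 1 < ‖z‖ → ‖z‖ ≤ ‖G z‖ := fun z hz =>
    hGg (hne_of_norm z hz.ne') ▸ hsym.norm_le_norm_apply hζ₀ hS hne hz
  have hlin := Complex.eq_deriv_zero_mul_of_norm_le_norm_apply hG (hGg0.eq_of_nhds.trans h0)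
    (hGg0.deriv_eq ▸ fun h => hderiv.1.ne' (by simp [h]))
    (fun z hz0 => (eq_or_ne z ζ₀).elim (· ▸ hGζ₀) fun hzζ => hGg hzζ ▸ hne z hz0 hzζ) hGgrowth
  rw [hGg0.deriv_eq] at hlin
  have hd_norm : ‖deriv g 0‖ = 1 := by
    refine le_antisymm ?_ ?_
    · simpa [← hGg (hne_of_norm 2⁻¹ (by norm_num)), hlin] using hS 2⁻¹ (by norm_num)
    · simpa [hlin] using hGgrowth 2 (by norm_num)
  have hd : deriv g 0 = 1 := by
    rw [Complex.eq_coe_norm_of_nonneg (Complex.nonneg_iff.2 ⟨hderiv.1.le, hderiv.2.symm⟩),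
      hd_norm, Complex.ofReal_one]
  intro z hz
  rw [← hGg hz, hlin, hd, one_mul]
end
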